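/- arXiv:2105.11557 — 3 statements merged into one kernel-verified Lean document; each statement's English description precedes it below -/
import Mathlib

section
/- Let Γ be a countable group, let F ⊆ Γ be a finite subset with 1 ∉ F, and call a set I ⊆ 2^Γ independent if I ∩ (σ·I) = ∅ for all σ ∈ F. Let J ⊆ Free(2^Γ) be a β-measurable independent set and let α be a real number with α < β(J). Then there exists a clopen (in the product topology on 2^Γ) independent set I ⊆ 2^Γ with β(I) ≥ α. -/
open MeasureTheory

/-- The Bernoulli shift action of a group `Γ` on `2^Γ = (Γ → Bool)`,
given by `(γ · x) δ = x (δ * γ)`. -/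
def bernoulliShift {Γ : Type*} [Group Γ] (γ : Γ) (x : Γ → Bool) : Γ → Bool :=
  fun δ => x (δ * γ)

/-- The free part `Free(2^Γ)` of the Bernoulli shift: points with trivial stabilizer. -/
def freePart (Γ : Type*) [Group Γ] : Set (Γ → Bool) :=
  {x | ∀ γ : Γ, γ ≠ 1 → bernoulliShift γ x ≠ x}

/-- `β` is the product of countably many copies of the uniform measure on `{0,1}`:
it gives each cylinder determined by finitely many coordinates its natural measure. -/
def IsBernoulliMeasure {Γ : Type*} [Group Γ] (β : Measure (Γ → Bool)) : Prop :=
  ∀ (D : Finset Γ) (φ : Γ → Bool),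
    β {x | ∀ δ ∈ D, x δ = φ δ} = (1 / 2 : ENNReal) ^ D.card

/-- Adjacency in the Schreier graph of the free part of the Bernoulli shift with
respect to a finite set `F`: distinct free points `x, y` with `y = σ · x` for some
`σ ∈ F ∪ F⁻¹`. -/
def schreierAdj {Γ : Type*} [Group Γ] (F : Finset Γ) (x y : Γ → Bool) : Prop :=
  x ∈ freePart Γ ∧ y ∈ freePart Γ ∧ x ≠ y ∧
    ∃ σ : Γ, (σ ∈ F ∨ σ⁻¹ ∈ F) ∧ y = bernoulliShift σ x

/-- A set of vertices is independent w.r.t. an adjacency relation if no two of its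
elements are adjacent. -/
def IndepIn {V : Type*} (Adj : V → V → Prop) (I : Set V) : Prop :=
  ∀ x ∈ I, ∀ y ∈ I, ¬ Adj x y

section Aux
variable {Γ : Type*} [Group Γ]

lemma bs_comp (σ τ : Γ) (x : Γ → Bool) :
    bernoulliShift σ (bernoulliShift τ x) = bernoulliShift (σ * τ) x := by
  funext δ; simp [bernoulliShift, mul_assoc]

lemma bs_one (x : Γ → Bool) : bernoulliShift (1 : Γ) x = x := by
  funext δ; simp [bernoulliShift]

lemma bs_measurable (σ : Γ) : Measurable (bernoulliShift (Γ := Γ) σ) :=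
  measurable_pi_iff.mpr fun δ => measurable_pi_apply _

lemma bs_continuous (σ : Γ) : Continuous (bernoulliShift (Γ := Γ) σ) :=
  continuous_pi fun δ => continuous_apply _

lemma bs_image (σ : Γ) (A : Set (Γ → Bool)) :
    bernoulliShift σ '' A = bernoulliShift σ⁻¹ ⁻¹' A := by
  ext x
  constructor
  · rintro ⟨y, hy, rfl⟩
    simpa [Set.mem_preimage, bs_comp, bs_one] using hy
  · intro hx
    exact ⟨bernoulliShift σ⁻¹ x, hx, by simp [bs_comp, bs_one]⟩

def Cyl (Γ : Type*) [Group Γ] : Set (Set (Γ → Bool)) :=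
  {S | ∃ (D : Finset Γ) (φ : Γ → Bool), S = {x | ∀ δ ∈ D, x δ = φ δ}}

lemma cyl_measurable (D : Finset Γ) (φ : Γ → Bool) :
    MeasurableSet {x : Γ → Bool | ∀ δ ∈ D, x δ = φ δ} := by
  have : {x : Γ → Bool | ∀ δ ∈ D, x δ = φ δ} = ⋂ δ ∈ D, (fun x : Γ → Bool => x δ) ⁻¹' {φ δ} := by
    ext x; simp
  rw [this]
  exact MeasurableSet.biInter D.countable_toSet
    fun δ _ => (measurable_pi_apply δ) (measurableSet_singleton _)

lemma cyl_pi : IsPiSystem (Cyl Γ) := by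
  classical
  rintro S ⟨D₁, φ₁, rfl⟩ T ⟨D₂, φ₂, rfl⟩ ⟨x, hx₁, hx₂⟩
  refine ⟨D₁ ∪ D₂, x, ?_⟩
  ext y
  simp only [Set.mem_inter_iff, Set.mem_setOf_eq, Finset.mem_union]
  constructor
  · rintro ⟨h₁, h₂⟩ δ (hδ | hδ)
    · rw [h₁ δ hδ, ← hx₁ δ hδ]
    · rw [h₂ δ hδ, ← hx₂ δ hδ]
  · intro h
    exact ⟨fun δ hδ => by rw [h δ (Or.inl hδ), hx₁ δ hδ],
           fun δ hδ => by rw [h δ (Or.inr hδ), hx₂ δ hδ]⟩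

lemma cyl_gen : (inferInstance : MeasurableSpace (Γ → Bool)) =
    MeasurableSpace.generateFrom (Cyl Γ) := by
  refine le_antisymm ?_ (MeasurableSpace.generateFrom_le ?_)
  · show MeasurableSpace.pi ≤ _
    refine iSup_le fun δ => ?_
    rw [← measurable_iff_comap_le]
    exact @measurable_to_countable' Bool (Γ → Bool) ⊤ _ (MeasurableSpace.generateFrom (Cyl Γ))
      _ (fun b => MeasurableSpace.measurableSet_generateFrom ⟨{δ}, fun _ => b, by ext x; simp⟩)
  · rintro S ⟨D, φ, rfl⟩
    exact cyl_measurable D φ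
end Aux

section Inv
variable {Γ : Type*} [Group Γ]

lemma map_bs (β : Measure (Γ → Bool)) [IsProbabilityMeasure β]
    (hβ : ∀ (D : Finset Γ) (φ : Γ → Bool),
      β {x | ∀ δ ∈ D, x δ = φ δ} = (1 / 2 : ENNReal) ^ D.card)
    (σ : Γ) : Measure.map (bernoulliShift σ) β = β := by
  classical
  have hinst : IsProbabilityMeasure (Measure.map (bernoulliShift σ) β) :=
    Measure.isProbabilityMeasure_map (bs_measurable σ).aemeasurable
  refine ext_of_generate_finite (Cyl Γ) cyl_gen cyl_pi ?_ ?_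
  · rintro S ⟨D, φ, rfl⟩
    rw [Measure.map_apply (bs_measurable σ) (cyl_measurable D φ)]
    have hpre : bernoulliShift σ ⁻¹' {x | ∀ δ ∈ D, x δ = φ δ}
        = {x | ∀ δ ∈ D.image (· * σ), x δ = (fun δ => φ (δ * σ⁻¹)) δ} := by
      ext x
      simp only [Set.mem_preimage, Set.mem_setOf_eq, Finset.mem_image, bernoulliShift]
      constructor
      · rintro h δ' ⟨δ, hδ, rfl⟩
        simpa using h δ hδ
      · intro h δ hδ
        simpa using h (δ * σ) ⟨δ, hδ, rfl⟩
    rw [hpre, hβ, hβ, Finset.card_image_of_injective _ (mul_left_injective σ)]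
  · simp [Measure.map_apply (bs_measurable σ) MeasurableSet.univ]

lemma bs_measure_eq (β : Measure (Γ → Bool)) [IsProbabilityMeasure β]
    (hβ : ∀ (D : Finset Γ) (φ : Γ → Bool),
      β {x | ∀ δ ∈ D, x δ = φ δ} = (1 / 2 : ENNReal) ^ D.card)
    (σ : Γ) {A : Set (Γ → Bool)} (hA : MeasurableSet A) :
    β (bernoulliShift σ '' A) = β A := by
  rw [bs_image]
  rw [← Measure.map_apply (bs_measurable σ⁻¹) hA, map_bs β hβ σ⁻¹]

lemma clopen_dense {Γ : Type*} [Group Γ] [Countable Γ]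
    (β : Measure (Γ → Bool)) [IsProbabilityMeasure β] :
    β.MeasureDense {A : Set (Γ → Bool) | IsClopen A} := by
  apply Measure.MeasureDense.of_generateFrom_isSetAlgebra_finite
  · exact ⟨isClopen_empty, fun s hs => hs.compl, fun s t hs ht => hs.union ht⟩
  · refine le_antisymm ?_ (MeasurableSpace.generateFrom_le fun A hA => hA.isOpen.measurableSet)
    show MeasurableSpace.pi ≤ _
    refine iSup_le fun δ => ?_
    rw [← measurable_iff_comap_le]
    exact @measurable_to_countable' Bool (Γ → Bool) ⊤ _
      (MeasurableSpace.generateFrom {A : Set (Γ → Bool) | IsClopen A}) _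
      (fun b => MeasurableSpace.measurableSet_generateFrom
        ((isClopen_discrete {b}).preimage (continuous_apply δ)))
end Inv


/-- Every `β`-measurable independent subset of the free part of the
shift can be approximated in measure from inside (up to any `α < β(J)`) by a clopen
independent subset of `2^Γ`. -/
theorem exists_clopen_independent_approximation
    {Γ : Type*} [Group Γ] [Countable Γ]
    (β : Measure (Γ → Bool)) [IsProbabilityMeasure β] (hβ : IsBernoulliMeasure β)
    (F : Finset Γ) (h1F : (1 : Γ) ∉ F)
    (J : Set (Γ → Bool)) (hJfree : J ⊆ freePart Γ) (hJmeas : NullMeasurableSet J β)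
    (hJind : ∀ σ ∈ F, J ∩ bernoulliShift σ '' J = ∅)
    (α : ℝ) (hα : α < (β J).toReal) :
    ∃ I : Set (Γ → Bool), IsClopen I ∧
      (∀ σ ∈ F, I ∩ bernoulliShift σ '' I = ∅) ∧
      α ≤ (β I).toReal := by
  classical
  obtain ⟨t, htJ, htm, hte⟩ := hJmeas.exists_measurable_subset_ae_eq
  have hβt : β t = β J := measure_congr hte
  set n := F.card with hn
  have hεpos : (0 : ℝ) < ((β J).toReal - α) / (2 * n + 2) := by
    apply div_pos (by linarith) (by positivity)
  set ε : ℝ := ((β J).toReal - α) / (2 * n + 2) with hε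
  obtain ⟨U, hUclo, hU⟩ := (clopen_dense β).approx t htm (measure_ne_top β t) ε hεpos
  have hUm : MeasurableSet U := hUclo.isOpen.measurableSet
  set R : Set (Γ → Bool) := ⋃ σ ∈ F, (U ∩ bernoulliShift σ '' U) with hR
  refine ⟨U \ R, ?_, ?_, ?_⟩
  · refine IsClopen.diff hUclo ?_
    refine Set.Finite.isClopen_biUnion F.finite_toSet fun σ _ => ?_
    rw [bs_image]
    exact hUclo.inter (hUclo.preimage (bs_continuous σ⁻¹))
  · intro σ hσ
    refine Set.eq_empty_iff_forall_notMem.mpr ?_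
    rintro x ⟨hxI, y, hyI, rfl⟩
    exact hxI.2 (Set.mem_biUnion hσ ⟨hxI.1, ⟨y, hyI.1, rfl⟩⟩)
  · -- measure estimate
    have hdiff1 : β (t \ U) ≤ ENNReal.ofReal ε := by
      refine le_of_lt (lt_of_le_of_lt (measure_mono ?_) hU)
      rw [Set.symmDiff_def]; exact Set.subset_union_left.trans (by
        exact Set.union_subset_union_left _ (by rfl))
    have hdiff2 : β (U \ t) ≤ ENNReal.ofReal ε := by
      refine le_of_lt (lt_of_le_of_lt (measure_mono ?_) hU)
      rw [Set.symmDiff_def]; exact Set.subset_union_right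
    -- each bad piece is small
    have hpiece : ∀ σ ∈ F, β (U ∩ bernoulliShift σ '' U) ≤ ENNReal.ofReal (2 * ε) := by
      intro σ hσ
      have hsub : U ∩ bernoulliShift σ '' U ⊆ (U \ t) ∪ bernoulliShift σ '' (U \ t) := by
        rintro x ⟨hxU, y, hyU, rfl⟩
        by_cases hxt : bernoulliShift σ y ∈ t
        · by_cases hyt : y ∈ t
          · exfalso
            have : bernoulliShift σ y ∈ J ∩ bernoulliShift σ '' J :=
              ⟨htJ hxt, ⟨y, htJ hyt, rfl⟩⟩
            rw [hJind σ hσ] at this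
            exact this
          · exact Or.inr ⟨y, ⟨hyU, hyt⟩, rfl⟩
        · exact Or.inl ⟨hxU, hxt⟩
      calc β (U ∩ bernoulliShift σ '' U)
          ≤ β (U \ t) + β (bernoulliShift σ '' (U \ t)) :=
            (measure_mono hsub).trans (measure_union_le _ _)
        _ = β (U \ t) + β (U \ t) := by
            rw [bs_measure_eq β hβ σ (hUm.diff htm)]
        _ ≤ ENNReal.ofReal ε + ENNReal.ofReal ε := add_le_add hdiff2 hdiff2
        _ = ENNReal.ofReal (2 * ε) := by
            rw [← ENNReal.ofReal_add hεpos.le hεpos.le]; ring_nf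
    have hRle : β R ≤ ENNReal.ofReal (2 * n * ε) := by
      calc β R ≤ ∑ σ ∈ F, β (U ∩ bernoulliShift σ '' U) := measure_biUnion_finset_le _ _
        _ ≤ ∑ _σ ∈ F, ENNReal.ofReal (2 * ε) := Finset.sum_le_sum hpiece
        _ = n * ENNReal.ofReal (2 * ε) := by
            rw [Finset.sum_const, nsmul_eq_mul, hn]
        _ = ENNReal.ofReal (2 * n * ε) := by
            rw [← ENNReal.ofReal_natCast n, ← ENNReal.ofReal_mul (by positivity)]
            congr 1; ring
    have hchain : β t ≤ β (U \ R) + ENNReal.ofReal ((2 * n + 1) * ε) := by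
      calc β t ≤ β ((t \ U) ∪ U) := measure_mono (Set.subset_diff_union t U)
        _ ≤ β (t \ U) + β U := measure_union_le _ _
        _ ≤ β (t \ U) + (β (U \ R) + β R) := by
            refine add_le_add le_rfl ?_
            refine (measure_mono (t := (U \ R) ∪ R) ?_).trans (measure_union_le _ _)
            exact Set.subset_diff_union U R
        _ ≤ ENNReal.ofReal ε + (β (U \ R) + ENNReal.ofReal (2 * n * ε)) :=
            add_le_add hdiff1 (add_le_add le_rfl hRle)
        _ = β (U \ R) + ENNReal.ofReal ((2 * n + 1) * ε) := by
            rw [show (2 * (n : ℝ) + 1) * ε = ε + 2 * n * ε by ring,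
              ENNReal.ofReal_add hεpos.le (by positivity)]
            ring
    have hfin : β (U \ R) + ENNReal.ofReal ((2 * n + 1) * ε) ≠ ⊤ :=
      ENNReal.add_ne_top.mpr ⟨measure_ne_top β _, ENNReal.ofReal_ne_top⟩
    have hto := ENNReal.toReal_mono hfin hchain
    rw [ENNReal.toReal_add (measure_ne_top β _) ENNReal.ofReal_ne_top,
      ENNReal.toReal_ofReal (by positivity), hβt] at hto
    have h2n : (0 : ℝ) < 2 * n + 2 := by positivity
    rw [hε] at hto
    have hd : ((β J).toReal - α) / (2 * (n : ℝ) + 2) * (2 * n + 2) = (β J).toReal - α :=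
      div_mul_cancel₀ _ (ne_of_gt h2n)
    nlinarith [mul_le_mul_of_nonneg_right hto h2n.le, hd, hα]
end

section
/- Let Γ be a countable group, let F ⊆ Γ be a finite subset with 1 ∉ F, and let Γ act freely on a standard Borel space X by a Borel action. Let D ⊆ Γ be a finite set, let Φ ⊆ 2^D (a set of functions D → {0,1}), and let I := { x ∈ 2^Γ : x|_D ∈ Φ }. Assume I is independent, i.e., I ∩ (σ·I) = ∅ for all σ ∈ F. Then there exist an integer N ≥ |D| and a family (I_φ) of Borel G(X, F)-independent subsets of X indexed by the functions φ : {0, …, N−1} → {0,1}, such that every point x ∈ X belongs to exactly |Φ|·2^{N−|D|} of the sets I_φ. -/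
open MeasureTheory

/-- Adjacency in the Schreier graph of a (left) action of `Γ` on `X` with respect to a
finite set `F`: distinct points `x, y` with `y = σ • x` for some `σ ∈ F ∪ F⁻¹`. -/
def schreierActionAdj {Γ X : Type*} [Group Γ] [MulAction Γ X] (F : Finset Γ)
    (x y : X) : Prop :=
  x ≠ y ∧ ∃ σ : Γ, (σ ∈ F ∨ σ⁻¹ ∈ F) ∧ y = σ • x


section GreedyColoring

variable {X : Type*} {m : ℕ}

/-- Pick the least color not in `u`, when possible. -/
noncomputable def pickCol (m : ℕ) (u : Finset (Fin (m + 1))) : Fin (m + 1) :=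
  if h : (uᶜ).Nonempty then (uᶜ).min' h else 0

lemma pickCol_not_mem (u : Finset (Fin (m + 1))) (hu : u.card ≤ m) : pickCol m u ∉ u := by
  have h : (uᶜ).Nonempty := by
    rw [← Finset.card_pos, Finset.card_compl, Fintype.card_fin]
    omega
  rw [pickCol, dif_pos h]
  have := Finset.min'_mem (uᶜ) h
  simpa [Finset.mem_compl] using this

/-- Greedy recoloring of an `ℕ`-coloring `n` by finitely many colors. -/
noncomputable def greedy (σs : Fin m → X → X) (n : X → ℕ) (k : ℕ) (x : X) : Fin (m + 1) :=
  pickCol m (Finset.univ.biUnion fun i : Fin m =>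
    if h : n (σs i x) < k then {greedy σs n (n (σs i x)) (σs i x)} else ∅)
termination_by k
decreasing_by exact h

lemma greedy_eq (σs : Fin m → X → X) (n : X → ℕ) (k : ℕ) (x : X) :
    greedy σs n k x = pickCol m (Finset.univ.biUnion fun i : Fin m =>
      if h : n (σs i x) < k then {greedy σs n (n (σs i x)) (σs i x)} else ∅) := by
  rw [greedy]

noncomputable def greedyCol (σs : Fin m → X → X) (n : X → ℕ) (x : X) : Fin (m + 1) :=
  greedy σs n (n x) x

lemma used_card_le (σs : Fin m → X → X) (n : X → ℕ) (k : ℕ) (x : X) :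
    (Finset.univ.biUnion fun i : Fin m =>
      if h : n (σs i x) < k then {greedy σs n (n (σs i x)) (σs i x)} else ∅).card ≤ m := by
  refine le_trans Finset.card_biUnion_le ?_
  calc ∑ i : Fin m, (if h : n (σs i x) < k then
          ({greedy σs n (n (σs i x)) (σs i x)} : Finset (Fin (m+1))) else ∅).card
      ≤ ∑ _i : Fin m, 1 := by
        refine Finset.sum_le_sum fun i _ => ?_
        split <;> simp
    _ = m := by simp

lemma greedyCol_ne_of_lt (σs : Fin m → X → X) (n : X → ℕ) (x : X) (i : Fin m)
    (h : n (σs i x) < n x) : greedyCol σs n (σs i x) ≠ greedyCol σs n x := by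
  intro heq
  have hmem : greedyCol σs n (σs i x) ∈ (Finset.univ.biUnion fun i' : Fin m =>
      if h' : n (σs i' x) < n x then {greedy σs n (n (σs i' x)) (σs i' x)} else ∅) := by
    refine Finset.mem_biUnion.2 ⟨i, Finset.mem_univ _, ?_⟩
    rw [dif_pos h]
    exact Finset.mem_singleton_self _
  have hnot : greedyCol σs n x ∉ (Finset.univ.biUnion fun i' : Fin m =>
      if h' : n (σs i' x) < n x then {greedy σs n (n (σs i' x)) (σs i' x)} else ∅) := by
    rw [greedyCol, greedy_eq]
    exact pickCol_not_mem _ (used_card_le σs n (n x) x)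
  rw [heq] at hmem
  exact hnot hmem

lemma greedyCol_ne (σs : Fin m → X → X) (n : X → ℕ)
    (hsym : ∀ i x, ∃ j, σs j (σs i x) = x) (hn : ∀ i x, n (σs i x) ≠ n x)
    (i : Fin m) (x : X) : greedyCol σs n (σs i x) ≠ greedyCol σs n x := by
  rcases lt_trichotomy (n (σs i x)) (n x) with h | h | h
  · exact greedyCol_ne_of_lt σs n x i h
  · exact absurd h (hn i x)
  · obtain ⟨j, hj⟩ := hsym i x
    have := greedyCol_ne_of_lt σs n (σs i x) j (by rw [hj]; exact h)
    rw [hj] at this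
    exact this.symm

lemma greedy_fiber_measurable [MeasurableSpace X] (σs : Fin m → X → X) (n : X → ℕ)
    (hσ : ∀ i, Measurable (σs i)) (hn : Measurable n) :
    ∀ k, ∀ col : Fin (m + 1), MeasurableSet {x | greedy σs n k x = col} := by
  intro k
  induction k using Nat.strong_induction_on with
  | _ k ih =>
  intro col
  classical
  set v : X → Fin m → ℕ := fun x i =>
    if n (σs i x) < k then (greedy σs n (n (σs i x)) (σs i x) : ℕ) else m + 1 with hv
  set G : (Fin m → ℕ) → Fin (m + 1) := fun w =>
    pickCol m (Finset.univ.biUnion fun i =>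
      if h : w i < m + 1 then {(⟨w i, h⟩ : Fin (m + 1))} else ∅) with hG
  have hval : ∀ x, greedy σs n k x = G (v x) := by
    intro x
    rw [greedy_eq, hG]
    congr 1
    refine Finset.biUnion_congr rfl fun i _ => ?_
    by_cases h : n (σs i x) < k
    · rw [dif_pos h]
      have h1 : v x i = (greedy σs n (n (σs i x)) (σs i x) : ℕ) := if_pos h
      rw [dif_pos (h1 ▸ Fin.is_lt _)]
      congr 1
      exact Fin.ext h1.symm
    · rw [dif_neg h]
      have h1 : v x i = m + 1 := if_neg h
      rw [dif_neg (by omega)]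
  have hvi : ∀ (i : Fin m) (a : ℕ), MeasurableSet {x | v x i = a} := by
    intro i a
    by_cases ha : a < m + 1
    · have : {x | v x i = a} = ⋃ j, ⋃ _ : j < k,
          ({x | n (σs i x) = j} ∩ {x | greedy σs n j (σs i x) = (⟨a, ha⟩ : Fin (m+1))}) := by
        ext x
        simp only [hv, Set.mem_setOf_eq, Set.mem_iUnion, Set.mem_inter_iff]
        constructor
        · intro hx
          by_cases h : n (σs i x) < k
          · rw [if_pos h] at hx
            exact ⟨n (σs i x), h, rfl, Fin.ext hx⟩
          · rw [if_neg h] at hx; omega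
        · rintro ⟨j, hj, h1, h2⟩
          rw [if_pos (h1 ▸ hj), h1, h2]
      rw [this]
      refine MeasurableSet.iUnion fun j => MeasurableSet.iUnion fun hj => ?_
      refine MeasurableSet.inter ?_ ?_
      · exact (hn.comp (hσ i)) (measurableSet_singleton j)
      · exact (hσ i) (ih j hj _)
    · by_cases ha' : a = m + 1
      · have : {x | v x i = a} = {x | k ≤ n (σs i x)} := by
          ext x
          simp only [hv, Set.mem_setOf_eq]
          constructor
          · intro hx
            by_cases h : n (σs i x) < k
            · rw [if_pos h] at hx
              have := Fin.is_lt (greedy σs n (n (σs i x)) (σs i x))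
              omega
            · omega
          · intro hx
            rw [if_neg (by omega)]
            omega
        rw [this]
        exact (hn.comp (hσ i)) measurableSet_Ici
      · have : {x | v x i = a} = ∅ := by
          ext x
          simp only [hv, Set.mem_setOf_eq, Set.mem_empty_iff_false, iff_false]
          intro hx
          by_cases h : n (σs i x) < k
          · rw [if_pos h] at hx
            have := Fin.is_lt (greedy σs n (n (σs i x)) (σs i x))
            omega
          · rw [if_neg h] at hx; omega
        rw [this]; exact MeasurableSet.empty
  have : {x | greedy σs n k x = col} = ⋃ w : Fin m → ℕ, ⋃ _ : G w = col, {x | v x = w} := by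
    ext x
    simp only [Set.mem_setOf_eq, Set.mem_iUnion, hval]
    exact ⟨fun h => ⟨v x, h, rfl⟩, by rintro ⟨w, h1, h2⟩; rw [h2]; exact h1⟩
  rw [this]
  refine MeasurableSet.iUnion fun w => MeasurableSet.iUnion fun _ => ?_
  have : {x | v x = w} = ⋂ i, {x | v x i = w i} := by
    ext x; simp [funext_iff]
  rw [this]
  exact MeasurableSet.iInter fun i => hvi i (w i)

lemma greedyCol_measurable [MeasurableSpace X] (σs : Fin m → X → X) (n : X → ℕ)
    (hσ : ∀ i, Measurable (σs i)) (hn : Measurable n) :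
    Measurable (greedyCol σs n) := by
  apply measurable_to_countable'
  intro col
  have : greedyCol σs n ⁻¹' {col} = ⋃ k, ({x | n x = k} ∩ {x | greedy σs n k x = col}) := by
    ext x
    simp only [Set.mem_preimage, Set.mem_singleton_iff, Set.mem_iUnion, Set.mem_inter_iff,
      Set.mem_setOf_eq, greedyCol]
    exact ⟨fun h => ⟨n x, rfl, h⟩, by rintro ⟨k, h1, h2⟩; rw [h1]; exact h2⟩
  rw [this]
  exact MeasurableSet.iUnion fun k => (hn (measurableSet_singleton k)).inter
    (greedy_fiber_measurable σs n hσ hn k col)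

end GreedyColoring

lemma exists_nat_coloring {X : Type*} [MeasurableSpace X] [StandardBorelSpace X] {m : ℕ}
    (σs : Fin m → X → X) (hσ : ∀ i, Measurable (σs i)) (hne : ∀ i x, σs i x ≠ x) :
    ∃ n : X → ℕ, Measurable n ∧ ∀ i x, n (σs i x) ≠ n x := by
  classical
  obtain ⟨e, he⟩ := exists_measurableEmbedding_real X
  set pred : ℚ × ℚ → X → Prop := fun pq x =>
    e x ∈ Set.Ioo (pq.1 : ℝ) (pq.2 : ℝ) ∧ ∀ i, e (σs i x) ∉ Set.Ioo (pq.1 : ℝ) (pq.2 : ℝ)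
    with hpred
  set Q : ℕ → X → Prop := fun k x => ∃ pq : ℚ × ℚ, Encodable.encode pq = k ∧ pred pq x with hQ
  have hex : ∀ x, ∃ k, Q k x := by
    intro x
    obtain ⟨ε, hε, hsep⟩ : ∃ ε : ℝ, 0 < ε ∧ ∀ i, ε ≤ |e (σs i x) - e x| := by
      set A : Finset ℝ := insert 1 (Finset.univ.image fun i : Fin m => |e (σs i x) - e x|)
        with hA
      have hAne : A.Nonempty := ⟨1, Finset.mem_insert_self _ _⟩
      refine ⟨A.min' hAne, ?_, fun i => Finset.min'_le _ _
        (Finset.mem_insert_of_mem (Finset.mem_image_of_mem _ (Finset.mem_univ i)))⟩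
      have hmem := Finset.min'_mem A hAne
      rcases Finset.mem_insert.1 hmem with h1 | h1
      · rw [h1]; norm_num
      · obtain ⟨i, _, h2⟩ := Finset.mem_image.1 h1
        rw [← h2]
        have : e (σs i x) ≠ e x := fun h => hne i x (he.injective h)
        have : e (σs i x) - e x ≠ 0 := sub_ne_zero.2 this
        positivity
    obtain ⟨q, hq1, hq2⟩ := exists_rat_btwn (show e x < e x + ε by linarith)
    obtain ⟨p, hp1, hp2⟩ := exists_rat_btwn (show e x - ε < e x by linarith)
    refine ⟨Encodable.encode ((p, q) : ℚ × ℚ), (p, q), rfl, ⟨hp2, hq1⟩, ?_⟩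
    rintro i ⟨h1, h2⟩
    have := hsep i
    have habs : |e (σs i x) - e x| < ε := abs_lt.2 ⟨by simp only at h1 h2 ⊢; linarith,
      by simp only at h1 h2 ⊢; linarith⟩
    linarith
  refine ⟨fun x => Nat.find (hex x), ?_, ?_⟩
  · have hQmeas : ∀ k, MeasurableSet {x | Q k x} := by
      intro k
      have : {x | Q k x} = ⋃ pq : ℚ × ℚ, ⋃ _ : Encodable.encode pq = k,
          (e ⁻¹' Set.Ioo (pq.1 : ℝ) (pq.2 : ℝ) ∩
            ⋂ i, (σs i) ⁻¹' (e ⁻¹' Set.Ioo (pq.1 : ℝ) (pq.2 : ℝ))ᶜ) := by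
        ext x
        simp only [hQ, hpred, Set.mem_setOf_eq, Set.mem_iUnion, Set.mem_inter_iff,
          Set.mem_preimage, Set.mem_iInter, Set.mem_compl_iff]
        tauto
      rw [this]
      refine MeasurableSet.iUnion fun pq => MeasurableSet.iUnion fun _ => ?_
      refine (he.measurable measurableSet_Ioo).inter (MeasurableSet.iInter fun i => ?_)
      exact (hσ i) (he.measurable measurableSet_Ioo).compl
    apply measurable_to_countable'
    intro k
    have : (fun x => Nat.find (hex x)) ⁻¹' {k} =
        {x | Q k x} ∩ ⋂ j, ⋂ _ : j < k, {x | Q j x}ᶜ := by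
      ext x
      simp only [Set.mem_preimage, Set.mem_singleton_iff, Nat.find_eq_iff, Set.mem_inter_iff,
        Set.mem_setOf_eq, Set.mem_iInter, Set.mem_compl_iff]
    rw [this]
    exact (hQmeas k).inter (MeasurableSet.iInter fun j => MeasurableSet.iInter fun _ =>
      (hQmeas j).compl)
  · intro i x h
    replace h : Nat.find (hex (σs i x)) = Nat.find (hex x) := h
    have h1 : Q (Nat.find (hex x)) x := Nat.find_spec (hex x)
    have h2 : Q (Nat.find (hex x)) (σs i x) := by
      rw [← h]; exact Nat.find_spec (hex (σs i x))
    obtain ⟨pq, hpq, hx1, hx2⟩ := h1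
    obtain ⟨pq', hpq', hy1, _⟩ := h2
    have : pq = pq' := Encodable.encode_injective (by rw [hpq, hpq'])
    subst this
    exact (hx2 i) hy1

lemma count_comp {α β : Type*} [Fintype α] [Fintype β] (g : α → β)
    (hg : Function.Injective g) (Φ : Finset (α → Bool)) :
    Nat.card {φ : β → Bool // (fun a => φ (g a)) ∈ Φ} =
      Φ.card * 2 ^ (Fintype.card β - Fintype.card α) := by
  classical
  let E : (β → Bool) ≃ (α → Bool) × ({b : β // b ∉ Set.range g} → Bool) :=
  { toFun := fun φ => (fun a => φ (g a), fun b => φ b.1)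
    invFun := fun p b => if hb : b ∈ Set.range g then p.1 hb.choose else p.2 ⟨b, hb⟩
    left_inv := by
      intro φ
      funext b
      by_cases hb : b ∈ Set.range g
      · simp only [dif_pos hb]
        rw [hb.choose_spec]
      · simp only [dif_neg hb]
    right_inv := by
      rintro ⟨p1, p2⟩
      refine Prod.ext ?_ ?_
      · funext a
        have hga : g a ∈ Set.range g := ⟨a, rfl⟩
        simp only [dif_pos hga]
        exact congrArg p1 (hg hga.choose_spec)
      · funext b
        simp only [dif_neg b.2] }
  let E' : {φ : β → Bool // (fun a => φ (g a)) ∈ Φ} ≃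
      {p : (α → Bool) × ({b : β // b ∉ Set.range g} → Bool) // p.1 ∈ Φ} :=
    E.subtypeEquiv fun φ => Iff.rfl
  let E'' : {p : (α → Bool) × ({b : β // b ∉ Set.range g} → Bool) // p.1 ∈ Φ} ≃
      {f : α → Bool // f ∈ Φ} × ({b : β // b ∉ Set.range g} → Bool) :=
  { toFun := fun q => (⟨q.1.1, q.2⟩, q.1.2)
    invFun := fun r => ⟨(r.1.1, r.2), r.1.2⟩
    left_inv := fun q => rfl
    right_inv := fun r => rfl }
  rw [Nat.card_congr (E'.trans E''), Nat.card_prod]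
  have h1 : Nat.card {f : α → Bool // f ∈ Φ} = Φ.card := by
    rw [Nat.card_eq_fintype_card]
    exact Fintype.card_coe Φ
  have h2 : Nat.card ({b : β // b ∉ Set.range g} → Bool) =
      2 ^ (Fintype.card β - Fintype.card α) := by
    rw [Nat.card_eq_fintype_card, Fintype.card_fun, Fintype.card_bool]
    congr 1
    rw [Fintype.card_subtype_compl]
    congr 1
    exact (Fintype.card_congr (Equiv.ofInjective g hg)).symm
  rw [h1, h2]

/-- Given a clopen independent set `I = {x : x|_D ∈ Φ}` in `2^Γ` and a
free Borel action of `Γ` on a standard Borel space `X`, there are `N ≥ |D|` and a family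
of Borel `G(X, F)`-independent sets indexed by maps `φ : N → 2` covering every point of
`X` exactly `|Φ| · 2^(N − |D|)` times. -/
theorem exists_family_covering_exactly
    {Γ : Type*} [Group Γ] [Countable Γ]
    (F : Finset Γ) (h1F : (1 : Γ) ∉ F)
    {X : Type*} [MeasurableSpace X] [StandardBorelSpace X] [MulAction Γ X]
    (hmeas : ∀ γ : Γ, Measurable fun x : X => γ • x)
    (hfree : ∀ γ : Γ, γ ≠ 1 → ∀ x : X, γ • x ≠ x)
    (D : Finset Γ) (Φ : Finset ({δ : Γ // δ ∈ D} → Bool))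
    (I : Set (Γ → Bool))
    (hI : I = {x : Γ → Bool | (fun δ : {δ : Γ // δ ∈ D} => x δ.1) ∈ Φ})
    (hIind : ∀ σ ∈ F, I ∩ bernoulliShift σ '' I = ∅) :
    ∃ (N : ℕ), D.card ≤ N ∧
      ∃ Ifam : (Fin N → Bool) → Set X,
        (∀ φ, MeasurableSet (Ifam φ) ∧ IndepIn (schreierActionAdj F) (Ifam φ)) ∧
        (∀ x : X, Nat.card {φ : Fin N → Bool // x ∈ Ifam φ} =
          Φ.card * 2 ^ (N - D.card)) := by
  classical
  -- the difference set S
  set S : Finset Γ := D.offDiag.image fun p => p.2 * p.1⁻¹ with hS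
  have hS1 : ∀ s ∈ S, s ≠ 1 := by
    intro s hs
    obtain ⟨p, hp, rfl⟩ := Finset.mem_image.1 hs
    obtain ⟨_, _, hne⟩ := Finset.mem_offDiag.1 hp
    simpa [mul_inv_eq_one] using fun h => hne h.symm
  have hSinv : ∀ s ∈ S, s⁻¹ ∈ S := by
    intro s hs
    obtain ⟨p, hp, rfl⟩ := Finset.mem_image.1 hs
    obtain ⟨h1, h2, hne⟩ := Finset.mem_offDiag.1 hp
    exact Finset.mem_image.2 ⟨(p.2, p.1), Finset.mem_offDiag.2 ⟨h2, h1, hne.symm⟩, by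
      simp [mul_inv_rev]⟩
  set m := S.card with hm
  set σs : Fin m → X → X := fun i x => ((S.equivFin.symm i : {s // s ∈ S}) : Γ) • x with hσs
  have hσmeas : ∀ i, Measurable (σs i) := fun i => hmeas _
  have hσne : ∀ i x, σs i x ≠ x := fun i x =>
    hfree _ (hS1 _ (S.equivFin.symm i).2) x
  have hσsym : ∀ i x, ∃ j, σs j (σs i x) = x := by
    intro i x
    set s : {s // s ∈ S} := S.equivFin.symm i with hsdef
    refine ⟨S.equivFin ⟨(s : Γ)⁻¹, hSinv _ s.2⟩, ?_⟩
    simp only [hσs, Equiv.symm_apply_apply]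
    exact inv_smul_smul _ x
  obtain ⟨n, hnmeas, hncol⟩ := exists_nat_coloring σs hσmeas hσne
  set c : X → Fin (m + 1) := greedyCol σs n with hc
  have hcmeas : Measurable c := greedyCol_measurable σs n hσmeas hnmeas
  have hcS : ∀ s, s ∈ S → ∀ x : X, c (s • x) ≠ c x := by
    intro s hs x
    have := greedyCol_ne σs n hσsym hncol (S.equivFin ⟨s, hs⟩) x
    simpa only [hσs, Equiv.symm_apply_apply] using this
  refine ⟨max D.card (m + 1), le_max_left _ _, ?_⟩
  set N := max D.card (m + 1) with hN
  have hmN : m + 1 ≤ N := le_max_right _ _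
  set f : X → Fin N := fun x => Fin.castLE hmN (c x) with hfdef
  have hfmeas : Measurable f :=
    (measurable_of_countable (Fin.castLE hmN)).comp hcmeas
  have hf : ∀ (x : X) (δ : Γ), δ ∈ D → ∀ δ' ∈ D, δ ≠ δ' → f (δ • x) ≠ f (δ' • x) := by
    intro x δ hδ δ' hδ' hne heq
    have hsS : δ' * δ⁻¹ ∈ S :=
      Finset.mem_image.2 ⟨(δ, δ'), Finset.mem_offDiag.2 ⟨hδ, hδ', hne⟩, rfl⟩
    have h2 := hcS _ hsS (δ • x)
    rw [smul_smul, inv_mul_cancel_right] at h2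
    exact h2 (Fin.castLE_injective hmN heq.symm)
  set Ifam : (Fin N → Bool) → Set X :=
    fun φ => {x | (fun δ : {δ : Γ // δ ∈ D} => φ (f (δ.1 • x))) ∈ Φ} with hIfam
  refine ⟨Ifam, fun φ => ⟨?_, ?_⟩, ?_⟩
  · -- measurability
    have hP : Measurable (fun x : X => (fun δ : {δ : Γ // δ ∈ D} => φ (f (δ.1 • x)))) := by
      refine measurable_pi_lambda _ fun δ => ?_
      exact (measurable_of_countable (fun j : Fin N => φ j)).comp
        (hfmeas.comp (hmeas δ.1))
    have hset : MeasurableSet (↑Φ : Set ({δ : Γ // δ ∈ D} → Bool)) := by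
      have : (↑Φ : Set ({δ : Γ // δ ∈ D} → Bool)) = ⋃ p ∈ Φ, {p} := by
        ext q; simp
      rw [this]
      refine MeasurableSet.biUnion Φ.countable_toSet fun p _ => ?_
      have : ({p} : Set ({δ : Γ // δ ∈ D} → Bool)) =
          ⋂ δ, (fun q : {δ : Γ // δ ∈ D} → Bool => q δ) ⁻¹' {p δ} := by
        ext q
        simp [funext_iff]
      rw [this]
      exact MeasurableSet.iInter fun δ =>
        (measurable_pi_apply δ) (measurableSet_singleton (p δ))
    exact hP hset
  · -- independence
    rintro x hx y hy ⟨hxy, σ, hσF, hyx⟩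
    set w : Γ → Bool := fun γ => φ (f (γ • x)) with hw
    have hwI : w ∈ I := by rw [hI]; exact hx
    have hwsI : bernoulliShift σ w ∈ I := by
      rw [hI]
      have hpat : (fun δ : {δ : Γ // δ ∈ D} => bernoulliShift σ w δ.1) =
          (fun δ : {δ : Γ // δ ∈ D} => φ (f (δ.1 • y))) := by
        funext δ
        rw [hyx, smul_smul]
        rfl
      show (fun δ : {δ : Γ // δ ∈ D} => bernoulliShift σ w δ.1) ∈ Φ
      rw [hpat]
      exact hy
    rcases hσF with hσ | hσ
    · have hmem : bernoulliShift σ w ∈ I ∩ bernoulliShift σ '' I :=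
        ⟨hwsI, ⟨w, hwI, rfl⟩⟩
      rw [hIind σ hσ] at hmem
      exact hmem
    · have hback : bernoulliShift σ⁻¹ (bernoulliShift σ w) = w := by
        funext γ
        simp [bernoulliShift, mul_assoc]
      have hmem : w ∈ I ∩ bernoulliShift σ⁻¹ '' I :=
        ⟨hwI, ⟨bernoulliShift σ w, hwsI, hback⟩⟩
      rw [hIind σ⁻¹ hσ] at hmem
      exact hmem
  · -- counting
    intro x
    set g : {δ : Γ // δ ∈ D} → Fin N := fun δ => f (δ.1 • x) with hg
    have hginj : Function.Injective g := by
      intro δ δ' h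
      by_contra hne'
      exact hf x δ.1 δ.2 δ'.1 δ'.2 (fun hh => hne' (Subtype.ext hh)) h
    have hcount := count_comp g hginj Φ
    rw [Fintype.card_fin, Fintype.card_coe] at hcount
    exact hcount
end

section
/- (Kechris–Solecki–Todorcevic) Let G be a Borel graph on a standard Borel space X such that every vertex of G has at most d neighbors, where d is a finite natural number. Then the Borel chromatic number of G is at most d + 1: there exist Borel G-independent sets I_1, …, I_{d+1} whose union is X. -/
/-!
Since every vertex has finitely many neighbours, the sets `U \ N(U)`, with `U` running through a
countable basis of a compatible Polish topology and `N(U)` the set of neighbours of points of `U`,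
form a countable cover of `X` by Borel independent sets. Scanning them in turn yields a Borel
maximal independent subset of any Borel set. Removing such sets `d + 1` times exhausts `X`: a
vertex surviving every round has a neighbour in each of the `d + 1` disjoint removed sets.

The descriptive set theory enters only through the Borelness of `N(A)` for Borel `A`. It is the
projection of a Borel subset of `X × X` whose sections have at most `d` points. Ordering the second
coordinate, such a projection is the injective image, hence Borel by Lusin–Souslin, of the set of
least points of the sections. That set is Borel by induction on `d`: inside the original set, its
complement is the projection of a Borel set with sections of at most `d - 1` points.
-/

open MeasureTheory Set Function

universe u

theorem Set.card_le_encard_of_forall_inter_nonempty {α ι : Type*} {s : ι → Set α}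
    (hs : Pairwise (Disjoint on s)) {t : Set α} (ht : ∀ i, (t ∩ s i).Nonempty) :
    ENat.card ι ≤ t.encard := by
  choose f hf using ht
  have hinj : Injective f := fun i j hij => by
    by_contra hne
    exact (hs hne).ne_of_mem (hf i).2 (hij ▸ (hf j).2) rfl
  exact hinj.encard_range.trans (encard_le_encard (range_subset_iff.2 fun i => (hf i).1))

-- `X` and `Y` share a universe because the induction replaces `X` by `X × Y`.
theorem measurableSet_image_fst_of_encard_le_of_measurableSet_lt {X Y : Type u}
    [MeasurableSpace X] [StandardBorelSpace X] [MeasurableSpace Y] [StandardBorelSpace Y]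
    [LinearOrder Y] (hlt : MeasurableSet {p : Y × Y | p.1 < p.2}) (d : ℕ) {B : Set (X × Y)}
    (hBm : MeasurableSet B) (hB : ∀ x, (Prod.mk x ⁻¹' B).encard ≤ d) :
    MeasurableSet (Prod.fst '' B) := by
  induction d generalizing X with
  | zero =>
    have hsec (x : X) : Prod.mk x ⁻¹' B = ∅ := encard_eq_zero.1 (nonpos_iff_eq_zero.1 (hB x))
    have : B = ∅ := eq_empty_of_forall_notMem fun p hp => (hsec p.1).subset hp
    simp [this]
  | succ d ih =>
    set T : Set ((X × Y) × Y) := {q | q.1 ∈ B ∧ (q.1.1, q.2) ∈ B ∧ q.2 < q.1.2}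
    have hTm : MeasurableSet T :=
      (measurable_fst hBm).inter (((measurable_fst.fst.prodMk measurable_snd) hBm).inter
        ((measurable_snd.prodMk measurable_fst.snd) hlt))
    have hT : ∀ b, (Prod.mk b ⁻¹' T).encard ≤ d := by
      intro b
      by_cases hb : b ∈ B
      · have hsub : Prod.mk b ⁻¹' T ⊆ Prod.mk b.1 ⁻¹' B \ {b.2} :=
          fun y hy => ⟨hy.2.1, hy.2.2.ne⟩
        have hsucc : (Prod.mk b.1 ⁻¹' B \ {b.2}).encard + 1 ≤ d + 1 := by
          rw [encard_sdiff_singleton_add_one (s := Prod.mk b.1 ⁻¹' B) hb]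
          exact_mod_cast hB b.1
        exact (encard_le_encard hsub).trans ((ENat.add_le_add_iff_right ENat.one_ne_top).1 hsucc)
      · simp [T, hb]
    -- `M` keeps, on each section of `B`, only its least point
    set M := B \ Prod.fst '' T
    have hfst : Prod.fst '' M = Prod.fst '' B := by
      refine (image_mono sdiff_subset).antisymm ?_
      rintro x ⟨⟨x, y⟩, hy, rfl⟩
      obtain ⟨z, hz, hzmin⟩ :=
        exists_min_image _ id (finite_of_encard_le_coe (hB x)) ⟨y, hy⟩
      refine ⟨(x, z), ⟨hz, ?_⟩, rfl⟩
      rintro ⟨⟨_, w⟩, ⟨-, hw, hwz⟩, rfl⟩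
      exact (hzmin w hw).not_gt hwz
    have hinj : InjOn Prod.fst M := by
      have hmin : ∀ {x y y'}, (x, y) ∈ M → (x, y') ∈ B → ¬ y' < y := fun hy hy' hlt =>
        hy.2 ⟨(_, _), ⟨hy.1, hy', hlt⟩, rfl⟩
      rintro ⟨x, y⟩ hy ⟨x', y'⟩ hy' (rfl : x = x')
      rw [le_antisymm (not_lt.1 (hmin hy' hy.1)) (not_lt.1 (hmin hy hy'.1))]
    rw [← hfst]
    exact (hBm.diff (ih hTm hT)).image_of_measurable_injOn measurable_fst hinj

theorem measurableSet_image_fst_of_encard_le {X Y : Type u}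
    [MeasurableSpace X] [StandardBorelSpace X] [MeasurableSpace Y] [StandardBorelSpace Y]
    (d : ℕ) {B : Set (X × Y)} (hBm : MeasurableSet B)
    (hB : ∀ x, (Prod.mk x ⁻¹' B).encard ≤ d) :
    MeasurableSet (Prod.fst '' B) := by
  obtain ⟨e, he⟩ := exists_measurableEmbedding_real Y
  have hlt : MeasurableSet {p : Y × Y | e p.1 < e p.2} :=
    measurableSet_lt (he.measurable.comp measurable_fst) (he.measurable.comp measurable_snd)
  let : LinearOrder Y := LinearOrder.lift' e he.injective
  exact measurableSet_image_fst_of_encard_le_of_measurableSet_lt hlt d hBm hB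

namespace SimpleGraph

variable {X : Type*} (G : SimpleGraph X)

def neighborhood (A : Set X) : Set X := {x | ∃ y ∈ A, G.Adj x y}

def greedyIndepStage (V : ℕ → Set X) (S : Set X) : ℕ → Set X
  | 0 => ∅
  | n + 1 => greedyIndepStage V S n ∪ ((V n ∩ S) \ G.neighborhood (greedyIndepStage V S n))

def greedyIndep (V : ℕ → Set X) (S : Set X) : Set X :=
  ⋃ n, G.greedyIndepStage V S n

def greedyUncolored (V : ℕ → Set X) : ℕ → Set X
  | 0 => univ
  | k + 1 => greedyUncolored V k \ G.greedyIndep V (greedyUncolored V k)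

def greedyColorClass (V : ℕ → Set X) (k : ℕ) : Set X :=
  G.greedyIndep V (G.greedyUncolored V k)

variable {G} {V : ℕ → Set X} {S : Set X}

theorem neighborhood_mono {A B : Set X} (h : A ⊆ B) : G.neighborhood A ⊆ G.neighborhood B :=
  fun _ ⟨y, hy, hxy⟩ => ⟨y, h hy, hxy⟩

theorem monotone_greedyIndepStage : Monotone (G.greedyIndepStage V S) :=
  monotone_nat_of_le_succ fun _ => subset_union_left

theorem greedyIndep_subset : G.greedyIndep V S ⊆ S := by
  refine iUnion_subset fun n => ?_
  induction n with
  | zero => exact empty_subset S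
  | succ n ih => exact union_subset ih fun _ hx => hx.1.2

theorem isIndepSet_greedyIndep (hV : ∀ n, G.IsIndepSet (V n)) :
    G.IsIndepSet (G.greedyIndep V S) := by
  refine (pairwise_iUnion monotone_greedyIndepStage.directed_le).2 fun n => ?_
  induction n with
  | zero => exact pairwise_empty _
  | succ n ih =>
    refine pairwise_union.2 ⟨ih, (hV n).mono fun _ hx => hx.1.1, fun x hx y hy _ => ?_⟩
    exact ⟨fun hxy => hy.2 ⟨x, hx, hxy.symm⟩, fun hyx => hy.2 ⟨x, hx, hyx⟩⟩

theorem subset_greedyIndep_union_neighborhood (hcover : ∀ x, ∃ n, x ∈ V n) :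
    S ⊆ G.greedyIndep V S ∪ G.neighborhood (G.greedyIndep V S) := by
  intro x hxS
  obtain ⟨n, hxn⟩ := hcover x
  by_cases hx : x ∈ G.neighborhood (G.greedyIndepStage V S n)
  · exact Or.inr (neighborhood_mono (subset_iUnion _ n) hx)
  · exact Or.inl (mem_iUnion.2 ⟨n + 1, Or.inr ⟨⟨hxn, hxS⟩, hx⟩⟩)

theorem greedyColorClass_subset_greedyUncolored (k : ℕ) :
    G.greedyColorClass V k ⊆ G.greedyUncolored V k :=
  greedyIndep_subset

theorem antitone_greedyUncolored : Antitone (G.greedyUncolored V) :=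
  antitone_nat_of_succ_le fun _ => sdiff_subset

theorem pairwise_disjoint_greedyColorClass : Pairwise (Disjoint on G.greedyColorClass V) := by
  have key : ∀ {j k}, j < k → Disjoint (G.greedyColorClass V j) (G.greedyColorClass V k) :=
    fun hjk => disjoint_sdiff_right.mono_right
      ((greedyColorClass_subset_greedyUncolored _).trans (antitone_greedyUncolored hjk))
  intro j k hjk
  rcases hjk.lt_or_gt with h | h
  exacts [key h, (key h).symm]

theorem mem_greedyUncolored {x : X} {k : ℕ} (hx : ∀ j < k, x ∉ G.greedyColorClass V j) :
    x ∈ G.greedyUncolored V k := by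
  induction k with
  | zero => exact mem_univ x
  | succ k ih => exact ⟨ih fun j hj => hx j (by omega), hx k k.lt_succ_self⟩

theorem exists_mem_greedyColorClass (hcover : ∀ x, ∃ n, x ∈ V n) {d : ℕ}
    (hdeg : ∀ x, (G.neighborSet x).encard ≤ d) (x : X) :
    ∃ i : Fin (d + 1), x ∈ G.greedyColorClass V i := by
  by_contra! hx
  have hnbr (i : Fin (d + 1)) : (G.neighborSet x ∩ G.greedyColorClass V i).Nonempty := by
    have hxi := mem_greedyUncolored (k := i) fun j hj => by simpa using hx ⟨j, by omega⟩
    obtain ⟨y, hy, hxy⟩ :=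
      (subset_greedyIndep_union_neighborhood hcover hxi).resolve_left (hx i)
    exact ⟨y, hxy, hy⟩
  have := (card_le_encard_of_forall_inter_nonempty
    (pairwise_disjoint_greedyColorClass.comp_of_injective Fin.val_injective) hnbr).trans (hdeg x)
  simp only [ENat.card_eq_coe_fintype_card, Fintype.card_fin] at this
  norm_cast at this
  omega

theorem measurableSet_greedyIndep [MeasurableSpace X]
    (hN : ∀ A, MeasurableSet A → MeasurableSet (G.neighborhood A))
    (hV : ∀ n, MeasurableSet (V n)) (hS : MeasurableSet S) :
    MeasurableSet (G.greedyIndep V S) := by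
  refine MeasurableSet.iUnion fun n => ?_
  induction n with
  | zero => exact .empty
  | succ n ih => exact ih.union (((hV n).inter hS).diff (hN _ ih))

theorem measurableSet_greedyColorClass [MeasurableSpace X]
    (hN : ∀ A, MeasurableSet A → MeasurableSet (G.neighborhood A))
    (hV : ∀ n, MeasurableSet (V n)) (k : ℕ) : MeasurableSet (G.greedyColorClass V k) := by
  refine measurableSet_greedyIndep hN hV ?_
  induction k with
  | zero => exact .univ
  | succ k ih => exact ih.diff (measurableSet_greedyIndep hN hV ih)

theorem measurableSet_neighborhood {X : Type u} [MeasurableSpace X] [StandardBorelSpace X]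
    {G : SimpleGraph X} (hG : MeasurableSet {p : X × X | G.Adj p.1 p.2}) {d : ℕ}
    (hdeg : ∀ x, (G.neighborSet x).encard ≤ d) {A : Set X} (hA : MeasurableSet A) :
    MeasurableSet (G.neighborhood A) := by
  have hfst : G.neighborhood A = Prod.fst '' {p : X × X | G.Adj p.1 p.2 ∧ p.2 ∈ A} := by
    ext x
    exact ⟨fun ⟨y, hy, hxy⟩ => ⟨(x, y), ⟨hxy, hy⟩, rfl⟩,
      fun ⟨_, ⟨hxy, hy⟩, hx⟩ => hx ▸ ⟨_, hy, hxy⟩⟩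
  rw [hfst]
  exact measurableSet_image_fst_of_encard_le d (hG.inter (measurable_snd hA))
    fun x => (encard_le_encard fun y hy => hy.1).trans (hdeg x)

theorem exists_measurable_isIndepSet_cover [MeasurableSpace X] [StandardBorelSpace X]
    (hfin : ∀ x, (G.neighborSet x).Finite)
    (hN : ∀ A, MeasurableSet A → MeasurableSet (G.neighborhood A)) :
    ∃ V : ℕ → Set X, (∀ n, MeasurableSet (V n)) ∧ (∀ n, G.IsIndepSet (V n)) ∧
      ∀ x, ∃ n, x ∈ V n := by
  let := upgradeStandardBorel X
  obtain ⟨U, hU⟩ := TopologicalSpace.exists_seq_basis X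
  have hUm (n : ℕ) : MeasurableSet (U n) := (hU.isOpen (mem_range_self n)).measurableSet
  refine ⟨fun n => U n \ G.neighborhood (U n), fun n => (hUm n).diff (hN _ (hUm n)),
    fun n x hx y hy _ hxy => hx.2 ⟨y, hy.1, hxy⟩, fun x => ?_⟩
  obtain ⟨_, ⟨n, rfl⟩, hxn, hn⟩ :=
    hU.exists_subset_of_mem_open (G.notMem_neighborSet_self (a := x)) (hfin x).isClosed.isOpen_compl
  exact ⟨n, hxn, fun ⟨y, hy, hxy⟩ => hn hy hxy⟩

end SimpleGraph

/-- Kechris–Solecki–Todorcevic. A Borel graph of maximum degree at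
most `d` on a standard Borel space has Borel chromatic number at most `d + 1`. -/
theorem borel_chromatic_le_degree_succ
    {X : Type*} [MeasurableSpace X] [StandardBorelSpace X]
    (G : SimpleGraph X)
    (hGBorel : MeasurableSet {p : X × X | G.Adj p.1 p.2})
    (d : ℕ)
    (hfin : ∀ x : X, {y : X | G.Adj x y}.Finite)
    (hdeg : ∀ x : X, {y : X | G.Adj x y}.ncard ≤ d) :
    ∃ I : Fin (d + 1) → Set X,
      (∀ i, MeasurableSet (I i) ∧ ∀ x ∈ I i, ∀ y ∈ I i, ¬ G.Adj x y) ∧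
      (⋃ i, I i) = Set.univ := by
  have hdeg' (x : X) : (G.neighborSet x).encard ≤ d :=
    encard_le_coe_iff_finite_ncard_le.2 ⟨hfin x, hdeg x⟩
  have hN (A : Set X) : MeasurableSet A → MeasurableSet (G.neighborhood A) :=
    G.measurableSet_neighborhood hGBorel hdeg'
  obtain ⟨V, hVm, hVindep, hVcover⟩ := G.exists_measurable_isIndepSet_cover hfin hN
  refine ⟨fun i => G.greedyColorClass V i, fun i => ⟨G.measurableSet_greedyColorClass hN hVm i,
    fun x hx y hy hxy => G.isIndepSet_greedyIndep hVindep hx hy (G.ne_of_adj hxy) hxy⟩, ?_⟩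
  exact eq_univ_of_forall fun x => mem_iUnion.2 (G.exists_mem_greedyColorClass hVcover hdeg' x)
end
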